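/- Let P = e_1…e_k be an ascending path (with respect to the zero schedule) given by its arc sequence, and let 1 < i < k. If s̄(i) = k, then either the suffix e_i…e_k or the suffix e_{i+1}…e_k is ascending; if s̲(i) = 1, then either the prefix e_1…e_i or the prefix e_1…e_{i−1} is ascending. -/

import Mathlib

open Finset

namespace EV

noncomputable section

/-- Charge after traversing `i` arcs of a path with arc gains `g`, battery capacity `B`,
initial charge `b`. -/
def charge (B b : ℝ) (g : ℕ → ℝ) : ℕ → ℝ
  | 0 => b
  | i + 1 => min (charge B b g i + g i) B

/-- The traversal of the path with `n` arcs is feasible from initial charge `b`. -/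
def Feasible (B b : ℝ) (g : ℕ → ℝ) (n : ℕ) : Prop :=
  ∀ i < n, 0 ≤ charge B b g i + g i

open Classical in
/-- Maximum final charge `α_b(P)` for a path `P` with `n` arc gains `g`,
as an extended real (`⊥ = -∞` if the traversal is infeasible). -/
def alpha (B b : ℝ) (g : ℕ → ℝ) (n : ℕ) : EReal :=
  if Feasible B b g n then ((charge B b g n : ℝ) : EReal) else ⊥

/-- Gain of the `i`-th vertex (0-indexed): the sum of the first `i` arc gains. -/
def vGain (g : ℕ → ℝ) (i : ℕ) : ℝ := ∑ t ∈ Finset.range i, g t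

/-- `P` is traversable: `α_B(P) ≥ 0`, i.e. feasible from a full battery. -/
def Traversable (B : ℝ) (g : ℕ → ℝ) (n : ℕ) : Prop := Feasible B B g n

/-- `C` is a charge drop schedule for a path with `n` arcs (vertices `0,…,n`):
no drop at the first vertex, all drops nonnegative. -/
def Schedule (C : ℕ → ℝ) (n : ℕ) : Prop := C 0 = 0 ∧ ∀ i ≤ n, 0 ≤ C i

/-- Gain of vertex `i` with respect to the charge drop schedule `C`. -/
def cGain (g C : ℕ → ℝ) (i : ℕ) : ℝ := vGain g i - ∑ t ∈ Finset.range (i + 1), C t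

/-- `P` (with `n` arcs) is ascending with respect to the schedule `C`. -/
def AscendingC (B : ℝ) (g C : ℕ → ℝ) (n : ℕ) : Prop :=
  Traversable B g n ∧ ∀ i ≤ n, 0 ≤ cGain g C i ∧ cGain g C i ≤ cGain g C n

/-- `P` (with `n` arcs) is descending with respect to the schedule `C`. -/
def DescendingC (B : ℝ) (g C : ℕ → ℝ) (n : ℕ) : Prop :=
  Traversable B g n ∧ ∀ i ≤ n, cGain g C n ≤ cGain g C i ∧ cGain g C i ≤ 0

/-- `P` is monotone with respect to the schedule `C`. -/
def MonotoneC (B : ℝ) (g C : ℕ → ℝ) (n : ℕ) : Prop :=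
  AscendingC B g C n ∨ DescendingC B g C n

/-- Ascending with respect to the zero schedule. -/
def Ascending (B : ℝ) (g : ℕ → ℝ) (n : ℕ) : Prop := AscendingC B g (fun _ => 0) n

/-- Descending with respect to the zero schedule. -/
def Descending (B : ℝ) (g : ℕ → ℝ) (n : ℕ) : Prop := DescendingC B g (fun _ => 0) n

/-- Monotone with respect to the zero schedule. -/
def MonotonePath (B : ℝ) (g : ℕ → ℝ) (n : ℕ) : Prop := Ascending B g n ∨ Descending B g n

/-- The contiguous subpath whose arcs start at arc index `a`. -/
def SubPath (g : ℕ → ℝ) (a : ℕ) : ℕ → ℝ := fun t => g (a + t)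

/-- Restriction of a charge drop schedule to the subpath starting at vertex `a`:
no drop at the subpath's first vertex. -/
def restrict (C : ℕ → ℝ) (a : ℕ) : ℕ → ℝ := fun t => if t = 0 then 0 else C (a + t)

/-- First-arc-bounded with respect to a schedule `C` (no drop at the second vertex,
and all vertex gains lie between the gains of the first two vertices). -/
def FirstArcBoundedC (g C : ℕ → ℝ) (n : ℕ) : Prop :=
  C 1 = 0 ∧
    ((0 ≤ g 0 ∧ ∀ i ≤ n, 0 ≤ cGain g C i ∧ cGain g C i ≤ g 0) ∨
     (g 0 ≤ 0 ∧ ∀ i ≤ n, g 0 ≤ cGain g C i ∧ cGain g C i ≤ 0))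

/-- Last-arc-bounded with respect to a schedule `C` (no drops at the last two vertices,
and all vertex gains lie between the gains of the last two vertices). -/
def LastArcBoundedC (g C : ℕ → ℝ) (n : ℕ) : Prop :=
  C (n - 1) = 0 ∧ C n = 0 ∧
    ((0 ≤ g (n - 1) ∧ ∀ i ≤ n, cGain g C (n - 1) ≤ cGain g C i ∧ cGain g C i ≤ cGain g C n) ∨
     (g (n - 1) < 0 ∧ ∀ i ≤ n, cGain g C n ≤ cGain g C i ∧ cGain g C i ≤ cGain g C (n - 1)))

/-- First-arc-bounded (zero schedule). -/
def FirstArcBounded (g : ℕ → ℝ) (n : ℕ) : Prop := FirstArcBoundedC g (fun _ => 0) n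

/-- Last-arc-bounded (zero schedule). -/
def LastArcBounded (g : ℕ → ℝ) (n : ℕ) : Prop := LastArcBoundedC g (fun _ => 0) n

/-- Arc-bounded: first- or last-arc-bounded. -/
def ArcBounded (g : ℕ → ℝ) (n : ℕ) : Prop := FirstArcBounded g n ∨ LastArcBounded g n

/-- A funnel: arc-bounded and containing no monotone subpath of 2 or 3 consecutive arcs. -/
def Funnel (B : ℝ) (g : ℕ → ℝ) (n : ℕ) : Prop :=
  ArcBounded g n ∧ ∀ a m, (m = 2 ∨ m = 3) → a + m ≤ n → ¬ MonotonePath B (SubPath g a) m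

/-- `j = s̄(i)`: the maximal index `j ≥ i` (among arcs of a path with `n` arcs) such that
the subpath of arcs `i,…,j` is first-arc-bounded. -/
def IsSbar (g : ℕ → ℝ) (n i j : ℕ) : Prop :=
  i ≤ j ∧ j < n ∧ FirstArcBounded (SubPath g i) (j - i + 1) ∧
    ∀ j', i ≤ j' → j' < n → FirstArcBounded (SubPath g i) (j' - i + 1) → j' ≤ j

/-- `j = s̲(i)`: the minimal index `j ≤ i` such that the subpath of arcs `j,…,i`
is last-arc-bounded. -/
def IsSlow (g : ℕ → ℝ) (n i j : ℕ) : Prop :=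
  j ≤ i ∧ i < n ∧ LastArcBounded (SubPath g j) (i - j + 1) ∧
    ∀ j', j' ≤ i → LastArcBounded (SubPath g j') (i - j' + 1) → j ≤ j'

/-- Arc gains of the walk around a cycle with `m` arc gains `g`, starting at vertex `a`. -/
def cyc (g : ℕ → ℝ) (m a : ℕ) : ℕ → ℝ := fun t => g ((a + t) % m)

/-- A walk of length `ℓ` from `x` to `y` in the directed graph with arc relation `A`. -/
def IsWalk {V : Type*} (A : V → V → Prop) (w : ℕ → V) (ℓ : ℕ) (x y : V) : Prop :=
  w 0 = x ∧ w ℓ = y ∧ ∀ t < ℓ, A (w t) (w (t + 1))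

/-- The sequence of arc gains induced by a walk `w` in a graph with gain function `g`. -/
def walkGains {V : Type*} (g : V → V → ℝ) (w : ℕ → V) : ℕ → ℝ :=
  fun t => g (w t) (w (t + 1))

/-
An ascending path already bounds every vertex gain from above by the final gain, so a suffix
(or prefix) is ascending as soon as its first (last) vertex is a minimum (maximum) of it.
If the suffix from arc `e_i` is first-arc-bounded, its gains lie between those of its first
two vertices, so one of these two vertices is a minimum of the suffix; dually, a
last-arc-bounded prefix has a maximum at one of its last two vertices. Traversability passes to
subpaths because the charge is monotone in the initial charge and never exceeds `B`.
-/

variable {B b : ℝ} {g : ℕ → ℝ}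

@[simp]
lemma vGain_zero (g : ℕ → ℝ) : vGain g 0 = 0 := by
  simp [vGain]

lemma vGain_one (g : ℕ → ℝ) : vGain g 1 = g 0 := by
  simp [vGain]

lemma vGain_subPath (g : ℕ → ℝ) (a j : ℕ) :
    vGain (SubPath g a) j = vGain g (a + j) - vGain g a := by
  simp only [vGain, SubPath, Finset.sum_range_add, add_sub_cancel_left]

@[simp]
lemma cGain_zero (g : ℕ → ℝ) (i : ℕ) : cGain g (fun _ => 0) i = vGain g i := by
  simp [cGain]

lemma charge_le_capacity (hb : b ≤ B) (g : ℕ → ℝ) : ∀ t, charge B b g t ≤ B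
  | 0 => hb
  | _ + 1 => min_le_right _ _

lemma charge_monotone (B : ℝ) (g : ℕ → ℝ) : ∀ t, Monotone fun b => charge B b g t
  | 0 => fun _ _ h => h
  | t + 1 => fun _ _ h => min_le_min_right B (add_le_add_left (charge_monotone B g t h) _)

lemma charge_add (B b : ℝ) (g : ℕ → ℝ) (a : ℕ) :
    ∀ t, charge B b g (a + t) = charge B (charge B b g a) (SubPath g a) t
  | 0 => rfl
  | t + 1 => by
    rw [← add_assoc, charge, charge_add B b g a t]
    rfl

lemma Feasible.mono {n m : ℕ} (h : Feasible B b g n) (hmn : m ≤ n) : Feasible B b g m :=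
  fun t ht => h t (ht.trans_le hmn)

lemma Feasible.mono_charge {b' : ℝ} {n : ℕ} (h : Feasible B b g n) (hb : b ≤ b') :
    Feasible B b' g n :=
  fun t ht => (h t ht).trans (add_le_add_left (charge_monotone B g t hb) _)

lemma Feasible.subPath {n : ℕ} (h : Feasible B b g n) (a : ℕ) :
    Feasible B (charge B b g a) (SubPath g a) (n - a) := by
  intro t ht
  rw [← charge_add]
  exact h (a + t) (by omega)

lemma Traversable.subPath {n : ℕ} (h : Traversable B g n) (a : ℕ) :
    Traversable B (SubPath g a) (n - a) :=
  (Feasible.subPath h a).mono_charge (charge_le_capacity le_rfl g a)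

lemma ascending_iff {n : ℕ} :
    Ascending B g n ↔ Traversable B g n ∧ ∀ i ≤ n, 0 ≤ vGain g i ∧ vGain g i ≤ vGain g n := by
  simp only [Ascending, AscendingC, cGain_zero]

lemma Ascending.subPath {n a : ℕ} (hP : Ascending B g n) (ha : a ≤ n)
    (hmin : ∀ j ≤ n - a, vGain g a ≤ vGain g (a + j)) :
    Ascending B (SubPath g a) (n - a) := by
  rw [ascending_iff] at hP ⊢
  refine ⟨hP.1.subPath a, fun j hj => ?_⟩
  have hmax := (hP.2 (a + j) (by omega)).2
  rw [vGain_subPath, vGain_subPath, Nat.add_sub_cancel' ha]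
  exact ⟨sub_nonneg.2 (hmin j hj), sub_le_sub_right hmax _⟩

lemma Ascending.prefix {n m : ℕ} (hP : Ascending B g n) (hm : m ≤ n)
    (hmax : ∀ j ≤ m, vGain g j ≤ vGain g m) : Ascending B g m := by
  rw [ascending_iff] at hP ⊢
  exact ⟨hP.1.mono hm, fun j hj => ⟨(hP.2 j (hj.trans hm)).1, hmax j hj⟩⟩

lemma FirstArcBounded.forall_vGain_ge {m : ℕ} (h : FirstArcBounded g m) :
    (∀ j ≤ m, vGain g 0 ≤ vGain g j) ∨ (∀ j ≤ m, vGain g 1 ≤ vGain g j) := by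
  obtain ⟨-, ⟨-, hb⟩ | ⟨-, hb⟩⟩ := h
  · exact .inl fun j hj => by simpa using (hb j hj).1
  · exact .inr fun j hj => by simpa [vGain_one] using (hb j hj).1

lemma LastArcBounded.forall_vGain_le {m : ℕ} (h : LastArcBounded g m) :
    (∀ j ≤ m, vGain g j ≤ vGain g m) ∨ (∀ j ≤ m, vGain g j ≤ vGain g (m - 1)) := by
  obtain ⟨-, -, ⟨-, hb⟩ | ⟨-, hb⟩⟩ := h
  · exact .inl fun j hj => by simpa using (hb j hj).2
  · exact .inr fun j hj => by simpa using (hb j hj).2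

theorem maximal_arcBounded_ascending_general (B : ℝ) (g : ℕ → ℝ) (n : ℕ)
    (hP : Ascending B g n) (i : ℕ) :
    (IsSbar g n i (n - 1) →
      Ascending B (SubPath g i) (n - i) ∨ Ascending B (SubPath g (i + 1)) (n - (i + 1))) ∧
    (IsSlow g n i 0 →
      Ascending B g (i + 1) ∨ Ascending B g i) := by
  constructor
  · rintro ⟨hin, hn, hFAB, -⟩
    rw [show n - 1 - i + 1 = n - i by omega] at hFAB
    rcases hFAB.forall_vGain_ge with hmin | hmin
    · refine .inl (hP.subPath (a := i) (by omega) fun j hj => ?_)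
      simpa [vGain_subPath] using hmin j hj
    · refine .inr (hP.subPath (a := i + 1) (by omega) fun j hj => ?_)
      have := hmin (j + 1) (by omega)
      rwa [vGain_subPath, vGain_subPath, sub_le_sub_iff_right, ← add_assoc, add_right_comm] at this
  · rintro ⟨-, hin, hLAB, -⟩
    rw [show SubPath g 0 = g from funext fun t => congrArg g (zero_add t),
      show i - 0 + 1 = i + 1 by omega] at hLAB
    rcases hLAB.forall_vGain_le with hmax | hmax
    · exact .inl (hP.prefix hin hmax)
    · exact .inr (hP.prefix hin.le fun j hj => hmax j (by omega))

/-- Let `P = e_0 … e_{n-1}` be ascending and `1 ≤ i`, `i + 1 < n`.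
If `s̄(i) = n - 1` then the suffix `e_i … e_{n-1}` or `e_{i+1} … e_{n-1}` is ascending;
if `s̲(i) = 0` then the prefix `e_0 … e_i` or `e_0 … e_{i-1}` is ascending. -/
theorem maximal_arcBounded_ascending (B : ℝ) (hB : 0 < B) (g : ℕ → ℝ) (n : ℕ)
    (hP : Ascending B g n) (i : ℕ) (h1 : 1 ≤ i) (h2 : i + 1 < n) :
    (IsSbar g n i (n - 1) →
      Ascending B (SubPath g i) (n - i) ∨ Ascending B (SubPath g (i + 1)) (n - (i + 1))) ∧
    (IsSlow g n i 0 →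
      Ascending B g (i + 1) ∨ Ascending B g i) :=
  maximal_arcBounded_ascending_general B g n hP i

end

end EV
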